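/- arXiv:math/0502232 — 4 statements merged into one kernel-verified Lean document; each statement's English description precedes it below -/
import Mathlib

section
/- For every α ∈ (0,1], the sequence p_α^L defined by p_α^L(0) = 1 - α/2 and p_α^L(k) = α⁻¹ ∫₀^α (α - t - (α-t)²/2)(1 - e^{-t})^{k-1} dt for k ≥ 1 satisfies ∑_{k=0}^∞ p_α^L(k) = 1. -/
/-!
Since `∑_{k ≥ 0} (1 - e^{-t})^k = e^t` for `t ≥ 0`, and the ratio stays below `1 - e^{-α} < 1`
on `[0, α]`, dominated convergence gives
`∑_{k ≥ 1} p k = α⁻¹ ∫₀^α (α - t - (α - t)^2/2) e^t dt`. The integrand is the derivative of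
`-(α - t)^2/2 · e^t`, so the integral is `α^2/2`, and `∑_{k ≥ 1} p k = α/2` compensates the
defect of `p 0 = 1 - α/2`.
-/

open Real MeasureTheory Set

theorem intervalIntegral.hasSum_integral_mul_pow {f q : ℝ → ℝ} {a b r : ℝ}
    (hf : Continuous f) (hq : Continuous q) (hr : r < 1) (hqr : ∀ t ∈ uIcc a b, |q t| ≤ r) :
    HasSum (fun k : ℕ => ∫ t in a..b, f t * q t ^ k) (∫ t in a..b, f t * (1 - q t)⁻¹) := by
  obtain ⟨C, hC⟩ := isCompact_uIcc.exists_bound_of_continuousOn hf.continuousOn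
  have hr0 : 0 ≤ r := (abs_nonneg _).trans (hqr a left_mem_uIcc)
  refine intervalIntegral.hasSum_integral_of_dominated_convergence (fun k _ => C * r ^ k)
    (fun k => (hf.mul (hq.pow k)).aestronglyMeasurable) ?_ ?_ ?_ ?_
  · refine fun k => Filter.Eventually.of_forall fun t ht => ?_
    have ht' := uIoc_subset_uIcc ht
    rw [norm_mul, norm_pow, Real.norm_eq_abs (q t)]
    exact mul_le_mul (hC t ht') (pow_le_pow_left₀ (abs_nonneg _) (hqr t ht') k)
      (by positivity) ((norm_nonneg _).trans (hC t ht'))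
  · exact Filter.Eventually.of_forall fun _ _ =>
      (summable_geometric_of_lt_one hr0 hr).mul_left C
  · exact intervalIntegrable_const
  · exact Filter.Eventually.of_forall fun t ht =>
      (hasSum_geometric_of_abs_lt_one ((hqr t (uIoc_subset_uIcc ht)).trans_lt hr)).mul_left (f t)

theorem inv_one_sub_one_sub_exp_neg (t : ℝ) : (1 - (1 - exp (-t)))⁻¹ = exp t := by
  rw [sub_sub_cancel, exp_neg, inv_inv]

theorem abs_one_sub_exp_neg_le {α t : ℝ} (ht : t ∈ Icc 0 α) :
    |1 - exp (-t)| ≤ 1 - exp (-α) := by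
  have h1 : exp (-t) ≤ 1 := exp_le_one_iff.mpr (by linarith [ht.1])
  have h2 : exp (-α) ≤ exp (-t) := exp_le_exp.mpr (by linarith [ht.2])
  rw [abs_of_nonneg (by linarith)]
  linarith

theorem integral_sub_sub_sq_div_two_mul_exp (α : ℝ) :
    ∫ t in (0:ℝ)..α, (α - t - (α - t) ^ 2 / 2) * exp t = α ^ 2 / 2 := by
  have hderiv (t : ℝ) :
      HasDerivAt (fun s => -((α - s) ^ 2 / 2) * exp s) ((α - t - (α - t) ^ 2 / 2) * exp t) t := by
    refine (((((hasDerivAt_id' t).const_sub α).fun_pow 2).div_const 2).fun_neg.fun_mul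
      (hasDerivAt_exp t)).congr_deriv ?_
    norm_num
    ring
  rw [intervalIntegral.integral_eq_sub_of_hasDerivAt (fun t _ => hderiv t)
    (by apply Continuous.intervalIntegrable; fun_prop)]
  simp

theorem hasSum_integral_mul_one_sub_exp_neg_pow {α : ℝ} (hα : 0 ≤ α) :
    HasSum (fun k : ℕ => ∫ t in (0:ℝ)..α, (α - t - (α - t) ^ 2 / 2) * (1 - exp (-t)) ^ k)
      (α ^ 2 / 2) := by
  have h := intervalIntegral.hasSum_integral_mul_pow (a := 0) (b := α)
    (f := fun t => α - t - (α - t) ^ 2 / 2) (q := fun t => 1 - exp (-t)) (by fun_prop)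
    (by fun_prop) (sub_lt_self 1 (exp_pos _))
    (fun t ht => abs_one_sub_exp_neg_le (uIcc_of_le hα ▸ ht))
  simpa only [inv_one_sub_one_sub_exp_neg, integral_sub_sub_sq_div_two_mul_exp] using h

/-- The limiting displacement distribution `p_α^L` for late-insertion coalesced
hashing sums to 1. -/
theorem stmt_1 (α : ℝ) (hα : α ∈ Set.Ioc (0:ℝ) 1) (p : ℕ → ℝ)
    (h0 : p 0 = 1 - α / 2)
    (hk : ∀ k : ℕ, 1 ≤ k →
      p k = α⁻¹ * ∫ t in (0:ℝ)..α,
        (α - t - (α - t) ^ 2 / 2) * (1 - Real.exp (-t)) ^ (k - 1)) :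
    ∑' k : ℕ, p k = 1 := by
  have hpos : HasSum (fun k => p (k + 1)) (α / 2) := by
    have h := (hasSum_integral_mul_one_sub_exp_neg_pow hα.1.le).mul_left α⁻¹
    have hα' : α⁻¹ * (α ^ 2 / 2) = α / 2 := by field_simp [hα.1.ne']
    rw [hα'] at h
    refine h.congr_fun fun k => ?_
    simp [hk (k + 1) k.succ_pos]
  rw [((hasSum_nat_add_iff 1).mp hpos).tsum_eq, Finset.sum_range_one, h0]
  ring
end

section
/- For every α ∈ (0,1], the sequence p_α^E defined by p_α^E(0) = 1 - α/2 and p_α^E(k) = α⁻¹ ∫₀^α (α - t) e^{-t} (1 - e^{-t})^{k-1} dt for k ≥ 1 satisfies ∑_{k=0}^∞ p_α^E(k) = 1. -/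
/-!
For each `t ≥ 0` the weights `e^{-t} (1 - e^{-t})^n`, `n ≥ 0`, form a geometric distribution, so
they sum to `1`. Summing `p (k + 1)` under the integral (dominated convergence) therefore leaves
`α⁻¹ ∫₀^α (α - t) dt = α / 2`, which together with `p 0 = 1 - α / 2` gives total mass `1`.
-/

open Real Filter

theorem one_sub_exp_neg_nonneg {t : ℝ} (ht : 0 ≤ t) : 0 ≤ 1 - exp (-t) := by
  simpa using exp_le_one_iff.2 (neg_nonpos.2 ht)

theorem hasSum_exp_neg_mul_one_sub_exp_neg_pow {t : ℝ} (ht : 0 ≤ t) :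
    HasSum (fun n : ℕ => exp (-t) * (1 - exp (-t)) ^ n) 1 := by
  have := (hasSum_geometric_of_lt_one (one_sub_exp_neg_nonneg ht)
    (by linarith [exp_pos (-t)])).mul_left (exp (-t))
  rwa [sub_sub_cancel, mul_inv_cancel₀ (exp_pos _).ne'] at this

theorem hasSum_intervalIntegral_mul_exp_neg_mul_one_sub_exp_neg_pow {a : ℝ} (ha : 0 ≤ a)
    {f : ℝ → ℝ} (hf : IntervalIntegrable f MeasureTheory.volume 0 a) :
    HasSum (fun n : ℕ => ∫ t in (0:ℝ)..a, f t * (exp (-t) * (1 - exp (-t)) ^ n))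
      (∫ t in (0:ℝ)..a, f t) := by
  have hnonneg : ∀ t ∈ Set.uIoc 0 a, 0 ≤ t := fun t ht => by
    rw [Set.uIoc_of_le ha] at ht; exact ht.1.le
  have hw : ∀ t ∈ Set.uIoc 0 a, HasSum (fun n : ℕ => exp (-t) * (1 - exp (-t)) ^ n) 1 :=
    fun t ht => hasSum_exp_neg_mul_one_sub_exp_neg_pow (hnonneg t ht)
  refine intervalIntegral.hasSum_integral_of_dominated_convergence
    (fun n t => |f t| * (exp (-t) * (1 - exp (-t)) ^ n)) (fun n => ?_) (fun n => ?_) ?_ ?_ ?_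
  · exact (hf.mul_continuousOn (by fun_prop)).def'.aestronglyMeasurable
  · refine Eventually.of_forall fun t ht => le_of_eq ?_
    rw [norm_mul, norm_mul, norm_pow, Real.norm_eq_abs, Real.norm_of_nonneg (exp_pos _).le,
      Real.norm_of_nonneg (one_sub_exp_neg_nonneg (hnonneg t ht))]
  · exact Eventually.of_forall fun t ht => ((hw t ht).mul_left _).summable
  · refine (intervalIntegrable_congr fun t ht => ?_).2 hf.abs
    simpa using ((hw t ht).mul_left |f t|).tsum_eq
  · exact Eventually.of_forall fun t ht => by simpa using (hw t ht).mul_left (f t)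

/-- The limiting displacement distribution `p_α^E` for early-insertion coalesced
hashing sums to 1. -/
theorem stmt_2 (α : ℝ) (hα : α ∈ Set.Ioc (0:ℝ) 1) (p : ℕ → ℝ)
    (h0 : p 0 = 1 - α / 2)
    (hk : ∀ k : ℕ, 1 ≤ k →
      p k = α⁻¹ * ∫ t in (0:ℝ)..α,
        (α - t) * Real.exp (-t) * (1 - Real.exp (-t)) ^ (k - 1)) :
    ∑' k : ℕ, p k = 1 := by
  have hI : ∫ t in (0:ℝ)..α, (α - t) = α ^ 2 / 2 := by
    simp [intervalIntegral.integral_comp_sub_left (fun x => x)]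
  have htail : HasSum (fun k => p (k + 1)) (α / 2) := by
    have := (hasSum_intervalIntegral_mul_exp_neg_mul_one_sub_exp_neg_pow hα.1.le
      (f := fun t => α - t) ((continuous_sub_left α).intervalIntegrable _ _)).mul_left α⁻¹
    rw [hI, show α⁻¹ * (α ^ 2 / 2) = α / 2 by field_simp] at this
    refine this.congr_fun fun k => ?_
    simp [hk (k + 1) (Nat.le_add_left 1 k), mul_assoc]
  rw [tsum_eq_zero_add' htail.summable, htail.tsum_eq, h0]
  ring
end

section
/- Let α ∈ (0,1]. If D is a random variable on ℕ with P(D = 0) = 1 - α/2 and P(D = k) = α⁻¹ ∫₀^α (α - t - (α-t)²/2)(1 - e^{-t})^{k-1} dt for k ≥ 1, then E[D] = (e^{2α} - 1)/(8α) + α/4 - 1/4. -/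
/-!
Write `g t = α - t - (α - t)² / 2` and `x t = 1 - e^{-t}`. Then
`E[D] = ∑ₖ k P(D = k) = α⁻¹ ∫₀^α g t · ∑ₖ (k + 1) (x t)ᵏ dt`, and the inner series is
`(1 - x t)⁻² = e^{2t}`. Exchanging sum and integral is legitimate because all terms are
nonnegative (`g ≥ 0` on `[0, α]` since `α ≤ 2`), and `∫₀^α g t e^{2t} dt` is elementary.
-/

open Real MeasureTheory

theorem hasSum_integral_of_nonneg {X ι : Type*} [MeasurableSpace X] {μ : Measure X} [Countable ι]
    {F : ι → X → ℝ} {f : X → ℝ} (hF_meas : ∀ n, AEStronglyMeasurable (F n) μ)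
    (hF_nonneg : ∀ n, ∀ᵐ a ∂μ, 0 ≤ F n a) (hf : Integrable f μ)
    (h_lim : ∀ᵐ a ∂μ, HasSum (fun n => F n a) (f a)) :
    HasSum (fun n => ∫ a, F n a ∂μ) (∫ a, f a ∂μ) :=
  hasSum_integral_of_dominated_convergence F hF_meas
    (fun n => (hF_nonneg n).mono fun _ ha => (Real.norm_of_nonneg ha).le)
    (h_lim.mono fun _ ha => ha.summable)
    (hf.congr (h_lim.mono fun _ ha => ha.tsum_eq.symm)) h_lim

theorem hasSum_integral_countable {X E : Type*} [MeasurableSpace X] [Countable X]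
    [MeasurableSingletonClass X] [NormedAddCommGroup E] [NormedSpace ℝ E] [CompleteSpace E]
    {μ : Measure X} [IsFiniteMeasure μ] {f : X → E}
    (hf : Summable fun x => μ.real {x} * ‖f x‖) :
    HasSum (fun x => μ.real {x} • f x) (∫ x, f x ∂μ) := by
  simpa [Measure.sum_smul_dirac, measureReal_def] using
    hasSum_integral_sum_dirac (c := fun x => μ {x}) (x := id) (fun _ => measure_ne_top _ _) hf

theorem hasSum_succ_mul_one_sub_exp_neg_pow {t : ℝ} (ht : 0 ≤ t) :
    HasSum (fun k : ℕ => ((k : ℝ) + 1) * (1 - exp (-t)) ^ k) (exp (2 * t)) := by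
  have hr : ‖1 - exp (-t)‖ < 1 := by
    rw [Real.norm_eq_abs, abs_lt]
    constructor <;> linarith [exp_pos (-t), exp_le_one_iff.mpr (neg_nonpos.mpr ht)]
  have hsum : exp (2 * t) = 1 / (1 - (1 - exp (-t))) ^ (1 + 1) := by
    rw [sub_sub_cancel, ← exp_nat_mul, one_div, ← exp_neg]
    ring_nf
  rw [hsum]
  convert! hasSum_choose_mul_geometric_of_norm_lt_one 1 hr using 3 with k
  simp

theorem integral_sub_sub_sq_mul_exp (α : ℝ) :
    ∫ t in (0 : ℝ)..α, (α - t - (α - t) ^ 2 / 2) * exp (2 * t)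
      = exp (2 * α) / 8 + α ^ 2 / 4 - α / 4 - 1 / 8 := by
  -- the quadratic factor `p` satisfies `p' + 2 p = α - t - (α - t)² / 2`
  have hderiv : ∀ x : ℝ, HasDerivAt
      (fun t => (-t ^ 2 / 4 + (α / 2 - 1 / 4) * t + (α / 4 - α ^ 2 / 4 + 1 / 8)) * exp (2 * t))
      ((α - x - (α - x) ^ 2 / 2) * exp (2 * x)) x := by
    intro x
    have hpoly : HasDerivAt (fun t : ℝ => -t ^ 2 / 4 + (α / 2 - 1 / 4) * t
        + (α / 4 - α ^ 2 / 4 + 1 / 8)) (-(2 * x) / 4 + (α / 2 - 1 / 4)) x := by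
      have hsq : HasDerivAt (fun t : ℝ => t ^ 2) (2 * x) x := by
        simpa using hasDerivAt_pow 2 x
      exact (((hsq.neg.div_const 4).add ((hasDerivAt_id x).const_mul _)).add_const _).congr_deriv
        (by simp)
    have hexp : HasDerivAt (fun t : ℝ => exp (2 * t)) (exp (2 * x) * 2) x := by
      simpa using ((hasDerivAt_id x).const_mul 2).exp
    exact (hpoly.mul hexp).congr_deriv (by ring)
  rw [intervalIntegral.integral_eq_sub_of_hasDerivAt (fun x _ => hderiv x)
    ((by fun_prop : Continuous _).intervalIntegrable 0 α)]
  simp only [exp_zero, mul_zero]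
  ring

theorem hasSum_succ_mul_integral_sub_sub_sq {α : ℝ} (hα0 : 0 ≤ α) (hα2 : α ≤ 2) :
    HasSum (fun k : ℕ => ((k : ℝ) + 1) *
        ∫ t in (0 : ℝ)..α, (α - t - (α - t) ^ 2 / 2) * (1 - exp (-t)) ^ k)
      (∫ t in (0 : ℝ)..α, (α - t - (α - t) ^ 2 / 2) * exp (2 * t)) := by
  simp only [intervalIntegral.integral_of_le hα0, ← integral_const_mul]
  refine hasSum_integral_of_nonneg (fun k => by fun_prop) (fun k => ?_)
    (Continuous.integrableOn_Ioc (by fun_prop)) ?_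
  all_goals filter_upwards [ae_restrict_mem measurableSet_Ioc] with t ⟨ht0, htα⟩
  · have hg : 0 ≤ α - t - (α - t) ^ 2 / 2 := by nlinarith
    have hx : 0 ≤ 1 - exp (-t) := by linarith [exp_le_one_iff.mpr (neg_nonpos.mpr ht0.le)]
    positivity
  · convert! (hasSum_succ_mul_one_sub_exp_neg_pow ht0.le).mul_left (α - t - (α - t) ^ 2 / 2)
      using 1
    funext k
    ring

theorem stmt_4_general (α : ℝ) (hα : α ∈ Set.Ioc (0:ℝ) 1)
    (μ : Measure ℕ) [IsProbabilityMeasure μ]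
    (hk : ∀ k : ℕ, 1 ≤ k →
      (μ {k}).toReal = α⁻¹ * ∫ t in (0:ℝ)..α,
        (α - t - (α - t) ^ 2 / 2) * (1 - Real.exp (-t)) ^ (k - 1)) :
    ∫ k, (k : ℝ) ∂μ = (Real.exp (2 * α) - 1) / (8 * α) + α / 4 - 1 / 4 := by
  obtain ⟨hα0, hα1⟩ := hα
  have hshifted : HasSum (fun k : ℕ => μ.real {k + 1} • ((k + 1 : ℕ) : ℝ))
      ((Real.exp (2 * α) - 1) / (8 * α) + α / 4 - 1 / 4) := by
    have hvalue : (Real.exp (2 * α) - 1) / (8 * α) + α / 4 - 1 / 4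
        = α⁻¹ * ∫ t in (0 : ℝ)..α, (α - t - (α - t) ^ 2 / 2) * exp (2 * t) := by
      rw [integral_sub_sub_sq_mul_exp]
      field_simp
      ring
    rw [hvalue]
    convert! (hasSum_succ_mul_integral_sub_sub_sq hα0.le (by linarith)).mul_left α⁻¹ using 2 with k
    rw [Measure.real, hk (k + 1) (by omega), Nat.add_sub_cancel, smul_eq_mul]
    push_cast
    ring
  have hmean : HasSum (fun k : ℕ => μ.real {k} • (k : ℝ))
      ((Real.exp (2 * α) - 1) / (8 * α) + α / 4 - 1 / 4) :=
    (hasSum_nat_add_iff' 1).mp (by simpa using hshifted)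
  exact (hasSum_integral_countable (by simpa using hmean.summable)).unique hmean

/-- The mean of the limiting displacement `D_α^L` for late-insertion coalesced
hashing: `E[D] = (e^{2α}-1)/(8α) + α/4 - 1/4`. -/
theorem stmt_4 (α : ℝ) (hα : α ∈ Set.Ioc (0:ℝ) 1)
    (μ : Measure ℕ) [IsProbabilityMeasure μ]
    (h0 : (μ {0}).toReal = 1 - α / 2)
    (hk : ∀ k : ℕ, 1 ≤ k →
      (μ {k}).toReal = α⁻¹ * ∫ t in (0:ℝ)..α,
        (α - t - (α - t) ^ 2 / 2) * (1 - Real.exp (-t)) ^ (k - 1)) :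
    ∫ k, (k : ℝ) ∂μ = (Real.exp (2 * α) - 1) / (8 * α) + α / 4 - 1 / 4 :=
  stmt_4_general α hα μ hk
end

section
/- Let α ∈ (0,1] and let D_α^U have the distribution P(D = 0) = 1 - α, P(D = k) = ∫₀^α (1 - α + t)(1 - e^{-t})^{k-1} dt for k ≥ 1. Then Var(D_α^U) = -e^{4α}/16 + (4/9)e^{3α} - (α/4 + 1/8)e^{2α} - α²/4 + 5α/12 - 37/144. -/
/-!
Writing `x = 1 - e^{-t}`, the law of `D` is `P(D = n + 1) = ∫₀^α (1 - α + t) xⁿ dt`, so a moment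
`E[f(D)]` is `∫₀^α (1 - α + t) Σₙ f(n + 1) xⁿ dt`, the interchange being justified by domination by
`f(n + 1) (1 - e^{-α})ⁿ`. Since `1 - x = e^{-t}`, the negative binomial series give
`Σ (n + 1) xⁿ = e^{2t}` and `Σ (n + 1)² xⁿ = 2e^{3t} - e^{2t}`, and the remaining integrals of
`(1 - α + t) e^{ct}` are elementary.
-/

open Real MeasureTheory ProbabilityTheory

lemma hasSum_succ_mul_geometric {𝕜 : Type*} [NormedField 𝕜] [CompleteSpace 𝕜] {r : 𝕜}
    (hr : ‖r‖ < 1) :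
    HasSum (fun n : ℕ => ((n : 𝕜) + 1) * r ^ n) (1 / (1 - r) ^ 2) := by
  simpa using hasSum_choose_mul_geometric_of_norm_lt_one 1 hr

lemma hasSum_succ_sq_mul_geometric {𝕜 : Type*} [NormedField 𝕜] [CompleteSpace 𝕜] {r : 𝕜}
    (hr : ‖r‖ < 1) :
    HasSum (fun n : ℕ => ((n : 𝕜) + 1) ^ 2 * r ^ n) (2 / (1 - r) ^ 3 - 1 / (1 - r) ^ 2) := by
  have hchoose (n : ℕ) : ((n + 2).choose 2 : 𝕜) * 2 = (n + 2) * (n + 1) := by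
    have : (n + 2).choose 2 * 2 = (n + 2) * (n + 1) := by
      simpa using (Nat.add_one_mul_choose_eq (n + 1) 1).symm
    simpa using congrArg (Nat.cast : ℕ → 𝕜) this
  have h := ((hasSum_choose_mul_geometric_of_norm_lt_one 2 hr).mul_left 2).sub
    (hasSum_succ_mul_geometric hr)
  have h' := h.congr_fun (g := fun n : ℕ => ((n : 𝕜) + 1) ^ 2 * r ^ n) fun n => by
    linear_combination (-r ^ n) * hchoose n
  rwa [mul_one_div] at h'

lemma norm_one_sub_exp_neg_lt_one {t : ℝ} (ht : 0 ≤ t) : ‖1 - exp (-t)‖ < 1 := by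
  rw [Real.norm_eq_abs, abs_lt]
  constructor <;> linarith [exp_pos (-t), exp_le_one_iff.2 (neg_nonpos.2 ht)]

lemma hasSum_succ_mul_one_sub_exp_neg {t : ℝ} (ht : 0 ≤ t) :
    HasSum (fun n : ℕ => ((n : ℝ) + 1) * (1 - exp (-t)) ^ n) (exp (2 * t)) := by
  simpa [← exp_nat_mul, ← exp_neg, mul_comm] using
    hasSum_succ_mul_geometric (norm_one_sub_exp_neg_lt_one ht)

lemma hasSum_succ_sq_mul_one_sub_exp_neg {t : ℝ} (ht : 0 ≤ t) :
    HasSum (fun n : ℕ => ((n : ℝ) + 1) ^ 2 * (1 - exp (-t)) ^ n)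
      (2 * exp (3 * t) - exp (2 * t)) := by
  simpa [← exp_nat_mul, ← exp_neg, div_eq_mul_inv, mul_comm] using
    hasSum_succ_sq_mul_geometric (norm_one_sub_exp_neg_lt_one ht)

lemma one_sub_exp_neg_mem_Icc {s t : ℝ} (hs : 0 ≤ s) (hst : s ≤ t) :
    1 - exp (-s) ∈ Set.Icc 0 (1 - exp (-t)) :=
  ⟨by linarith [exp_le_one_iff.2 (neg_nonpos.2 hs)], by linarith [exp_le_exp.2 (neg_le_neg hst)]⟩

lemma norm_mul_one_sub_exp_neg_pow_le {α t : ℝ} (hα : α ≤ 1) (ht : t ∈ Set.Ioc 0 α) (n : ℕ) :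
    ‖(1 - α + t) * (1 - exp (-t)) ^ n‖ ≤ (1 - exp (-α)) ^ n := by
  obtain ⟨hx0, hxα⟩ := one_sub_exp_neg_mem_Icc ht.1.le ht.2
  rw [norm_mul, norm_pow, Real.norm_of_nonneg hx0, Real.norm_of_nonneg (by linarith [ht.1])]
  calc (1 - α + t) * (1 - exp (-t)) ^ n ≤ 1 * (1 - exp (-α)) ^ n := by
        gcongr
        linarith [ht.2]
    _ = _ := one_mul _

lemma hasSum_mul_intervalIntegral {α : ℝ} (hα : α ∈ Set.Ioc 0 1) {w : ℕ → ℝ} {g : ℝ → ℝ}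
    (hw : Summable fun n => ‖w n‖ * (1 - exp (-α)) ^ n)
    (hg : ∀ t ∈ Set.Ioc 0 α, HasSum (fun n => w n * (1 - exp (-t)) ^ n) (g t)) :
    HasSum (fun n => w n * ∫ t in (0:ℝ)..α, (1 - α + t) * (1 - exp (-t)) ^ n)
      (∫ t in (0:ℝ)..α, (1 - α + t) * g t) := by
  simp_rw [← intervalIntegral.integral_const_mul]
  refine intervalIntegral.hasSum_integral_of_dominated_convergence
    (fun n _ => ‖w n‖ * (1 - exp (-α)) ^ n) (fun n => by fun_prop) ?_
    (ae_of_all _ fun _ _ => hw) intervalIntegrable_const (ae_of_all _ fun t ht => ?_)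
  · refine fun n => ae_of_all _ fun t ht => ?_
    rw [Set.uIoc_of_le hα.1.le] at ht
    rw [norm_mul]
    exact mul_le_mul_of_nonneg_left (norm_mul_one_sub_exp_neg_pow_le hα.2 ht n) (norm_nonneg _)
  · rw [Set.uIoc_of_le hα.1.le] at ht
    simpa [mul_left_comm] using (hg t ht).mul_left (1 - α + t)

lemma integrable_of_summable_measureReal_mul_norm {X : Type*} [MeasurableSpace X] [Countable X]
    [MeasurableSingletonClass X] {μ : Measure X} [IsFiniteMeasure μ] {f : X → ℝ}
    (hf : Summable fun x => μ.real {x} * ‖f x‖) : Integrable f μ := by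
  simpa [Measure.sum_smul_dirac] using
    integrable_sum_dirac (c := fun x => μ {x}) (x := id) (fun _ => measure_ne_top _ _) hf

lemma hasSum_measureReal_mul_integral {X : Type*} [MeasurableSpace X] [Countable X]
    [MeasurableSingletonClass X] {μ : Measure X} [IsFiniteMeasure μ] {f : X → ℝ}
    (hf : Summable fun x => μ.real {x} * ‖f x‖) :
    HasSum (fun x => μ.real {x} * f x) (∫ x, f x ∂μ) := by
  simpa [Measure.sum_smul_dirac, measureReal_def] using
    hasSum_integral_sum_dirac (c := fun x => μ {x}) (x := id) (fun _ => measure_ne_top _ _) hf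

lemma integral_add_mul_exp (p c a b : ℝ) (hc : c ≠ 0) :
    ∫ t in a..b, (p + t) * exp (c * t)
      = ((p + b) / c - 1 / c ^ 2) * exp (c * b) - ((p + a) / c - 1 / c ^ 2) * exp (c * a) := by
  refine intervalIntegral.integral_eq_sub_of_hasDerivAt
    (f := fun t => ((p + t) / c - 1 / c ^ 2) * exp (c * t)) (fun t _ => ?_)
    ((by fun_prop : Continuous fun t => (p + t) * exp (c * t)).intervalIntegrable _ _)
  have hexp : HasDerivAt (fun t => exp (c * t)) (exp (c * t) * c) t := by
    simpa using ((hasDerivAt_id t).const_mul c).exp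
  refine ((((hasDerivAt_id t).const_add p).div_const c).sub_const (1 / c ^ 2)).mul hexp
    |>.congr_deriv ?_
  simp only [id]
  field_simp
  ring

lemma hasSum_measureReal_mul_of_hasSum {α : ℝ} (hα : α ∈ Set.Ioc 0 1) {μ : Measure ℕ}
    (hk : ∀ k : ℕ, 1 ≤ k →
      (μ {k}).toReal = ∫ t in (0:ℝ)..α, (1 - α + t) * (1 - exp (-t)) ^ (k - 1))
    {f : ℕ → ℝ} (hf₀ : f 0 = 0) (hf : 0 ≤ f) {g : ℝ → ℝ}
    (hg : ∀ t ∈ Set.Icc 0 α, HasSum (fun n => f (n + 1) * (1 - exp (-t)) ^ n) (g t)) :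
    HasSum (fun k => μ.real {k} * f k) (∫ t in (0:ℝ)..α, (1 - α + t) * g t) := by
  rw [← hasSum_nat_add_iff' 1]
  have hw : Summable fun n => ‖f (n + 1)‖ * (1 - exp (-α)) ^ n := by
    simpa [Real.norm_of_nonneg (hf _)] using (hg α ⟨hα.1.le, le_rfl⟩).summable
  have := hasSum_mul_intervalIntegral hα hw fun t ht => hg t (Set.Ioc_subset_Icc_self ht)
  simpa [hf₀, measureReal_def, hk _ (Nat.le_add_left 1 _), mul_comm] using this

theorem stmt_7_general (α : ℝ) (hα : α ∈ Set.Ioc (0:ℝ) 1)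
    (μ : Measure ℕ) [IsProbabilityMeasure μ]
    (hk : ∀ k : ℕ, 1 ≤ k →
      (μ {k}).toReal = ∫ t in (0:ℝ)..α, (1 - α + t) * (1 - Real.exp (-t)) ^ (k - 1)) :
    variance (fun k : ℕ => (k : ℝ)) μ =
      -Real.exp (4 * α) / 16 + (4 / 9) * Real.exp (3 * α)
        - (α / 4 + 1 / 8) * Real.exp (2 * α) - α ^ 2 / 4 + 5 * α / 12 - 37 / 144 := by
  have h₁ := hasSum_measureReal_mul_of_hasSum hα hk (f := fun k => (k : ℝ)) Nat.cast_zero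
    (fun k => k.cast_nonneg) fun t ht => by simpa using hasSum_succ_mul_one_sub_exp_neg ht.1
  have h₂ := hasSum_measureReal_mul_of_hasSum hα hk (f := fun k => (k : ℝ) ^ 2) (by simp)
    (fun k => sq_nonneg _) fun t ht => by simpa using hasSum_succ_sq_mul_one_sub_exp_neg ht.1
  have hs₂ : Summable fun k => μ.real {k} * ‖(k : ℝ) ^ 2‖ := by simpa using h₂.summable
  rw [variance_eq_sub ((memLp_two_iff_integrable_sq measurable_from_nat.aestronglyMeasurable).2
    (integrable_of_summable_measureReal_mul_norm hs₂))]
  have e₁ : ∫ k, (k : ℝ) ∂μ = _ :=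
    (hasSum_measureReal_mul_integral (by simpa using h₁.summable)).unique h₁
  have e₂ : ∫ k, (k : ℝ) ^ 2 ∂μ = _ := (hasSum_measureReal_mul_integral hs₂).unique h₂
  change ∫ k, (k : ℝ) ^ 2 ∂μ - (∫ k, (k : ℝ) ∂μ) ^ 2 = _
  have hint (c : ℝ) : IntervalIntegrable (fun t => (1 - α + t) * exp (c * t)) volume 0 α :=
    (by fun_prop : Continuous fun t => (1 - α + t) * exp (c * t)).intervalIntegrable _ _
  simp_rw [mul_sub, mul_left_comm (1 - α + _) 2] at e₂
  rw [e₁, e₂, intervalIntegral.integral_sub ((hint 3).const_mul 2) (hint 2),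
    intervalIntegral.integral_const_mul, integral_add_mul_exp _ _ _ _ two_ne_zero,
    integral_add_mul_exp _ _ _ _ three_ne_zero]
  have h4 : exp (4 * α) = exp (2 * α) ^ 2 := by rw [← exp_nat_mul]; ring_nf
  simp only [h4, mul_zero, exp_zero, add_zero]
  ring

/-- The variance of the limiting unsuccessful-search distribution `D_α^U`:
`Var(D_α^U) = -e^{4α}/16 + (4/9)e^{3α} - (α/4+1/8)e^{2α} - α²/4 + 5α/12 - 37/144`. -/
theorem stmt_7 (α : ℝ) (hα : α ∈ Set.Ioc (0:ℝ) 1)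
    (μ : Measure ℕ) [IsProbabilityMeasure μ]
    (h0 : (μ {0}).toReal = 1 - α)
    (hk : ∀ k : ℕ, 1 ≤ k →
      (μ {k}).toReal = ∫ t in (0:ℝ)..α, (1 - α + t) * (1 - Real.exp (-t)) ^ (k - 1)) :
    variance (fun k : ℕ => (k : ℝ)) μ =
      -Real.exp (4 * α) / 16 + (4 / 9) * Real.exp (3 * α)
        - (α / 4 + 1 / 8) * Real.exp (2 * α) - α ^ 2 / 4 + 5 * α / 12 - 37 / 144 :=
  stmt_7_general α hα μ hk
end
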